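/- arXiv:1012.0222 — 3 statements merged into one kernel-verified Lean document; each statement's English description precedes it below -/
import Mathlib

section
/- Let k be a field of characteristic zero, N > 1 a natural number, and q ∈ k a primitive N-th root of unity. For natural numbers a, i, j with 0 ≤ a, i, j < N and i + j = N + a, one has ∑_{k=0}^{a} q^{k(k−j)} · binom(j,k)_q · binom(i,a−k)_q = 1. -/
/-!
The Gaussian binomial `gaussBinom q n m`, given by the q-Pascal recurrence, makes sense for every
`q`, and it agrees with the factorial quotient `qBinom q n m` as long as `n < N`, since the
q-factorials below `N` do not vanish. After the substitution `q ^ (m * (m - j)) = q ^ (m * (i - a + m))`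
(valid as `q ^ N = 1` and `i - a = N - j`) the sum is the q-Vandermonde convolution for
`gaussBinom q (j + i) a = gaussBinom q (N + a) a`. Expanding this once more by q-Vandermonde, now
as `N + a`, only the term `gaussBinom q N 0 * gaussBinom q a a = 1` survives, because
`gaussBinom q N x = 0` for `0 < x < N`: its factorial expression contains `(N)_q = 0`.
-/

/-- The q-integer `(n)_q = 1 + q + ⋯ + q^{n-1}`. -/
def qNat {k : Type*} [Field k] (q : k) (n : ℕ) : k :=
  ∑ i ∈ Finset.range n, q ^ i

/-- The q-factorial `(n)!_q = (1)_q (2)_q ⋯ (n)_q`, with `(0)!_q = 1`. -/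
def qFact {k : Type*} [Field k] (q : k) (n : ℕ) : k :=
  ∏ i ∈ Finset.range n, qNat q (i + 1)

/-- The Gaussian binomial coefficient `binom(n,m)_q = (n)!_q / ((n-m)!_q (m)!_q)`. -/
def qBinom {k : Type*} [Field k] (q : k) (n m : ℕ) : k :=
  qFact q n / (qFact q (n - m) * qFact q m)

section GaussBinom

variable {R : Type*} [CommRing R]

def gaussBinom (q : R) : ℕ → ℕ → R
  | _, 0 => 1
  | 0, _ + 1 => 0
  | n + 1, m + 1 => gaussBinom q n m + q ^ (m + 1) * gaussBinom q n (m + 1)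

@[simp] lemma gaussBinom_zero_right (q : R) (n : ℕ) : gaussBinom q n 0 = 1 := by
  cases n <;> rfl

lemma gaussBinom_succ_succ (q : R) (n m : ℕ) :
    gaussBinom q (n + 1) (m + 1) = gaussBinom q n m + q ^ (m + 1) * gaussBinom q n (m + 1) :=
  rfl

@[simp] lemma gaussBinom_zero_succ (q : R) (m : ℕ) : gaussBinom q 0 (m + 1) = 0 := rfl

lemma gaussBinom_eq_zero_of_lt (q : R) {n m : ℕ} (h : n < m) : gaussBinom q n m = 0 := by
  induction n generalizing m with
  | zero => obtain ⟨m, rfl⟩ := Nat.exists_eq_succ_of_ne_zero h.ne'; rfl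
  | succ n ih =>
    obtain ⟨m, rfl⟩ := Nat.exists_eq_succ_of_ne_zero (Nat.ne_zero_of_lt h)
    rw [gaussBinom_succ_succ, ih (by omega), ih (by omega), mul_zero, add_zero]

@[simp] lemma gaussBinom_self (q : R) (n : ℕ) : gaussBinom q n n = 1 := by
  induction n with
  | zero => rfl
  | succ n ih => rw [gaussBinom_succ_succ, ih, gaussBinom_eq_zero_of_lt q n.lt_succ_self, mul_zero,
      add_zero]

lemma pow_sub_pow_mul_gaussBinom (q : R) (n m : ℕ) :
    (q ^ n - q ^ m) * gaussBinom q n m = q ^ m * (q ^ (m + 1) - 1) * gaussBinom q n (m + 1) := by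
  induction n generalizing m with
  | zero => cases m <;> simp
  | succ n ih =>
    cases m with
    | zero =>
      have h := ih 0
      simp only [gaussBinom_zero_right, pow_zero, zero_add, gaussBinom_succ_succ] at h ⊢
      linear_combination q * h
    | succ m =>
      rw [gaussBinom_succ_succ, gaussBinom_succ_succ]
      linear_combination q * ih m + q ^ (m + 2) * ih (m + 1)

/-- The second q-Pascal rule `[n+1, m+1] = q^(n-m) [n, m] + [n, m+1]`, multiplied by `q^(m+1)`
so that no subtraction of exponents occurs. -/
lemma pow_mul_gaussBinom_succ_succ (q : R) (n m : ℕ) :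
    q ^ (m + 1) * gaussBinom q (n + 1) (m + 1)
      = q ^ (n + 1) * gaussBinom q n m + q ^ (m + 1) * gaussBinom q n (m + 1) := by
  rw [gaussBinom_succ_succ]
  linear_combination (-q) * pow_sub_pow_mul_gaussBinom q n m

lemma gaussBinom_add [IsDomain R] {q : R} (hq : q ≠ 0) (m : ℕ) {n r : ℕ} (hr : r ≤ n) :
    gaussBinom q (m + n) r = ∑ x ∈ Finset.range (r + 1),
      gaussBinom q m x * gaussBinom q n (r - x) * q ^ (x * (n - r + x)) := by
  induction m generalizing n r with
  | zero =>
    rw [Finset.sum_eq_single_of_mem 0 (by simp)]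
    · simp
    · rintro (_ | x) _ hx
      · exact absurd rfl hx
      · simp
  | succ m ih =>
    cases r with
    | zero => simp
    | succ r =>
      obtain ⟨d, rfl⟩ : ∃ d, n = r + 1 + d := ⟨n - (r + 1), by omega⟩
      apply mul_left_cancel₀ (pow_ne_zero (r + 1) hq)
      rw [show m + 1 + (r + 1 + d) = m + (r + 1 + d) + 1 by ring, pow_mul_gaussBinom_succ_succ,
        ih (by omega), ih (by omega), show r + 1 + d - r = d + 1 by omega,
        show r + 1 + d - (r + 1) = d by omega, Finset.sum_range_succ' _ (r + 1),
        Finset.sum_range_succ' _ (r + 1)]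
      simp only [Nat.succ_sub_succ, gaussBinom_zero_right, one_mul, pow_zero, mul_one,
        Nat.sub_zero, Nat.zero_mul]
      rw [mul_add, mul_add, Finset.mul_sum, Finset.mul_sum, Finset.mul_sum, ← add_assoc,
        ← Finset.sum_add_distrib]
      congr 1
      refine Finset.sum_congr rfl fun x _ => ?_
      linear_combination (-(q ^ (r + 1 + (x + 1) * (d + x))) * gaussBinom q (r + 1 + d) (r - x)) *
        pow_mul_gaussBinom_succ_succ q m x

end GaussBinom

section QFactorial

variable {k : Type*} [Field k]

lemma qNat_succ (q : k) (n : ℕ) : qNat q (n + 1) = qNat q n + q ^ n :=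
  Finset.sum_range_succ _ n

lemma qNat_add (q : k) (a b : ℕ) : qNat q (a + b) = qNat q a + q ^ a * qNat q b := by
  induction b with
  | zero => simp [qNat]
  | succ b ih => rw [← add_assoc, qNat_succ, ih, qNat_succ, pow_add]; ring

@[simp] lemma qFact_zero (q : k) : qFact q 0 = 1 := Finset.prod_range_zero _

lemma qFact_succ (q : k) (n : ℕ) : qFact q (n + 1) = qFact q n * qNat q (n + 1) :=
  Finset.prod_range_succ _ n

lemma gaussBinom_mul_qFact (q : k) {n m : ℕ} (hmn : m ≤ n) :
    gaussBinom q n m * (qFact q (n - m) * qFact q m) = qFact q n := by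
  induction n generalizing m with
  | zero => obtain rfl := Nat.le_zero.mp hmn; simp
  | succ n ih =>
    rcases m with _ | m
    · simp
    rcases hmn.lt_or_eq with hlt | heq
    · obtain ⟨u, rfl⟩ : ∃ u, n = m + 1 + u := ⟨n - (m + 1), by omega⟩
      have h₁ := ih (m := m) (by omega)
      have h₂ := ih (m := m + 1) (by omega)
      rw [show m + 1 + u - m = u + 1 by omega, qFact_succ q u] at h₁
      rw [show m + 1 + u - (m + 1) = u by omega, qFact_succ q m] at h₂
      rw [gaussBinom_succ_succ, show m + 1 + u + 1 - (m + 1) = u + 1 by omega, qFact_succ q u,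
        qFact_succ q m, qFact_succ q (m + 1 + u), show m + 1 + u + 1 = (m + 1) + (u + 1) by omega,
        qNat_add q (m + 1) (u + 1)]
      linear_combination qNat q (m + 1) * h₁ + q ^ (m + 1) * qNat q (u + 1) * h₂
    · obtain rfl : m = n := by omega
      simp

end QFactorial

namespace IsPrimitiveRoot

variable {k : Type*} [Field k] {q : k} {N : ℕ}

lemma qNat_ne_zero (hq : IsPrimitiveRoot q N) {t : ℕ} (ht : 0 < t) (htN : t < N) :
    qNat q t ≠ 0 := by
  intro h
  have := geom_sum_mul q t
  rw [← qNat, h, zero_mul, eq_comm, sub_eq_zero] at this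
  exact hq.pow_ne_one_of_pos_of_lt ht.ne' htN this

lemma qFact_ne_zero (hq : IsPrimitiveRoot q N) {t : ℕ} (htN : t < N) : qFact q t ≠ 0 := by
  induction t with
  | zero => simp
  | succ t ih => rw [qFact_succ]; exact mul_ne_zero (ih (by omega)) (hq.qNat_ne_zero t.succ_pos htN)

lemma qFact_self_eq_zero (hq : IsPrimitiveRoot q N) (hN : 1 < N) : qFact q N = 0 := by
  obtain ⟨P, rfl⟩ : ∃ P, N = P + 1 := ⟨N - 1, by omega⟩
  rw [qFact_succ, qNat, hq.geom_sum_eq_zero hN, mul_zero]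

lemma qBinom_eq_gaussBinom (hq : IsPrimitiveRoot q N) {n m : ℕ} (hmn : m ≤ n) (hn : n < N) :
    qBinom q n m = gaussBinom q n m := by
  rw [qBinom, ← gaussBinom_mul_qFact q hmn, mul_div_assoc,
    div_self (mul_ne_zero (hq.qFact_ne_zero (by omega)) (hq.qFact_ne_zero (by omega))), mul_one]

lemma gaussBinom_self_eq_zero (hq : IsPrimitiveRoot q N) {x : ℕ} (hx : 0 < x) (hxN : x < N) :
    gaussBinom q N x = 0 := by
  have h := gaussBinom_mul_qFact q hxN.le
  rw [hq.qFact_self_eq_zero (by omega)] at h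
  exact (mul_eq_zero.mp h).resolve_right
    (mul_ne_zero (hq.qFact_ne_zero (by omega)) (hq.qFact_ne_zero hxN))

lemma gaussBinom_add_self (hq : IsPrimitiveRoot q N) {a : ℕ} (ha : a < N) :
    gaussBinom q (N + a) a = 1 := by
  rw [gaussBinom_add (hq.ne_zero (by omega)) N le_rfl, Finset.sum_eq_single_of_mem 0 (by simp)]
  · simp
  · intro x hx hx0
    rw [hq.gaussBinom_self_eq_zero (Nat.pos_of_ne_zero hx0)
      (by have := Finset.mem_range.mp hx; omega), zero_mul, zero_mul]

end IsPrimitiveRoot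

theorem stmt_0_general {k : Type*} [Field k] (N : ℕ) (q : k)
    (hq : IsPrimitiveRoot q N) (a i j : ℕ) (hi : i < N) (hj : j < N)
    (hij : i + j = N + a) :
    ∑ m ∈ Finset.range (a + 1),
      q ^ ((m : ℤ) * ((m : ℤ) - (j : ℤ))) * qBinom q j m * qBinom q i (a - m) = 1 := by
  have hq0 : q ≠ 0 := hq.ne_zero (by omega)
  have hexp (m : ℕ) : q ^ ((m : ℤ) * ((m : ℤ) - (j : ℤ))) = q ^ (m * (i - a + m)) := by
    have hij' : (i : ℤ) + j = N + a := by exact_mod_cast hij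
    rw [← zpow_natCast, show (m : ℤ) * ((m : ℤ) - (j : ℤ)) = ((m * (i - a + m) : ℕ) : ℤ)
        + (N : ℤ) * -(m : ℤ) by
          push_cast [Nat.cast_sub (show a ≤ i by omega)]; linear_combination -(m : ℤ) * hij',
      zpow_add₀ hq0, zpow_mul, zpow_natCast q N, hq.pow_eq_one, one_zpow, mul_one]
  calc _ = ∑ m ∈ Finset.range (a + 1),
        gaussBinom q j m * gaussBinom q i (a - m) * q ^ (m * (i - a + m)) := by
        refine Finset.sum_congr rfl fun m hm => ?_
        have hma := Finset.mem_range.mp hm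
        rw [hexp, hq.qBinom_eq_gaussBinom (by omega) hj, hq.qBinom_eq_gaussBinom (by omega) hi]
        ring
    _ = gaussBinom q (N + a) a := by rw [← hij, add_comm i, gaussBinom_add hq0 j (by omega)]
    _ = 1 := hq.gaussBinom_add_self (by omega)

theorem stmt_0 {k : Type*} [Field k] [CharZero k] (N : ℕ) (hN : 1 < N) (q : k)
    (hq : IsPrimitiveRoot q N) (a i j : ℕ) (ha : a < N) (hi : i < N) (hj : j < N)
    (hij : i + j = N + a) :
    ∑ m ∈ Finset.range (a + 1),
      q ^ ((m : ℤ) * ((m : ℤ) - (j : ℤ))) * qBinom q j m * qBinom q i (a - m) = 1 :=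
  stmt_0_general N q hq a i j hi hj hij
end

section
/- Let H be a bialgebra over a field k and J ∈ H ⊗ H, written J = ∑ J¹ ⊗ J². Define a bilinear product ∗ on the dual space H* = Hom_k(H, k) by (X ∗ Y)(h) = ∑ X(h₍₁₎ J¹) · Y(h₍₂₎ J²) for X, Y ∈ H*, h ∈ H (using Sweedler notation Δ(h) = h₍₁₎ ⊗ h₍₂₎). Then: (a) ∗ is associative if and only if ((Δ⊗id)(J))·(J⊗1) = ((id⊗Δ)(J))·(1⊗J) in H ⊗ H ⊗ H; (b) the counit ε is a two-sided unit for ∗ if and only if (ε⊗id)(J) = 1 = (id⊗ε)(J). -/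
/-! Both `(X ∗ Y) ∗ Z` and `X ∗ (Y ∗ Z)`, evaluated at `h`, are `X ⊗ Y ⊗ Z` applied to
`Δ⁽²⁾(h)` times `(Δ ⊗ id)(J) (J ⊗ 1)`, resp. `(id ⊗ Δ)(J) (1 ⊗ J)`: the maps `Δ ⊗ id` and
`id ⊗ Δ` are algebra maps and agree on `Δ(h)` by coassociativity. At `h = 1` this exhibits the
two elements of `H ⊗ H ⊗ H` themselves, and product functionals separate points there. Likewise
`(ε ∗ X)(h) = X(h · (ε ⊗ id)(J))` and `(X ∗ ε)(h) = X(h · (id ⊗ ε)(J))`, because `ε ⊗ id` and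
`id ⊗ ε` are algebra maps that are left inverse to `Δ`. -/

open scoped TensorProduct

noncomputable section

variable (k H : Type*) [Field k] [Ring H] [Bialgebra k H]

/-- `Δ ⊗ id : H ⊗ H → H ⊗ H ⊗ H` (with `H ⊗ H ⊗ H = H ⊗ (H ⊗ H)`). -/
def comul12 : (H ⊗[k] H) →ₗ[k] H ⊗[k] (H ⊗[k] H) :=
  (TensorProduct.assoc k H H H).toLinearMap ∘ₗ
    TensorProduct.map (Coalgebra.comul (R := k) (A := H)) LinearMap.id

/-- `id ⊗ Δ : H ⊗ H → H ⊗ H ⊗ H`. -/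
def comul23 : (H ⊗[k] H) →ₗ[k] H ⊗[k] (H ⊗[k] H) :=
  TensorProduct.map LinearMap.id (Coalgebra.comul (R := k) (A := H))

/-- `ε ⊗ id : H ⊗ H → H`. -/
def counitL : (H ⊗[k] H) →ₗ[k] H :=
  (TensorProduct.lid k H).toLinearMap ∘ₗ
    TensorProduct.map (Coalgebra.counit (R := k) (A := H)) LinearMap.id

/-- `id ⊗ ε : H ⊗ H → H`. -/
def counitR : (H ⊗[k] H) →ₗ[k] H :=
  (TensorProduct.rid k H).toLinearMap ∘ₗ
    TensorProduct.map LinearMap.id (Coalgebra.counit (R := k) (A := H))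

/-- The element `J ⊗ 1` of `H ⊗ (H ⊗ H)`. -/
def tmulOne (J : H ⊗[k] H) : H ⊗[k] (H ⊗[k] H) :=
  TensorProduct.assoc k H H H (J ⊗ₜ[k] (1 : H))

/-- The twisted convolution product on `H* = Hom_k(H, k)`:
`(X ∗ Y)(h) = ∑ X(h₍₁₎ J¹) · Y(h₍₂₎ J²)`, i.e. `(X ⊗ Y)(Δ(h) · J)`. -/
def twMul (J : H ⊗[k] H) (X Y : Module.Dual k H) : Module.Dual k H :=
  ((TensorProduct.lid k k).toLinearMap ∘ₗ TensorProduct.map X Y) ∘ₗ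
    LinearMap.mulRight k J ∘ₗ Coalgebra.comul (R := k) (A := H)

namespace TensorProduct

open Module

variable {R M N P : Type*} [CommRing R] [AddCommGroup M] [AddCommGroup N] [AddCommGroup P]
  [Module R M] [Module R N] [Module R P]

theorem dualDistrib_tmul_eq_comp_rTensor (f : Dual R M) (g : Dual R N) :
    dualDistrib R M N (f ⊗ₜ g) = g ∘ₗ (TensorProduct.lid R N).toLinearMap ∘ₗ f.rTensor N := by
  ext m n
  simp

theorem eq_zero_of_forall_lid_rTensor_eq_zero [Module.Free R M] (t : M ⊗[R] N)
    (h : ∀ f : Dual R M, TensorProduct.lid R N (f.rTensor N t) = 0) : t = 0 := by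
  classical
  let b := Module.Free.chooseBasis R M
  apply (equivFinsuppOfBasisLeft b).injective
  ext i
  rw [equivFinsuppOfBasisLeft_apply, h, map_zero, Finsupp.zero_apply]

theorem eq_zero_of_forall_dualDistrib_eq_zero [Module.Free R M] [Module.Projective R N]
    (t : M ⊗[R] N) (h : ∀ f g, dualDistrib R M N (f ⊗ₜ g) t = 0) : t = 0 :=
  eq_zero_of_forall_lid_rTensor_eq_zero t fun f ↦
    (forall_dual_apply_eq_zero_iff R _).mp fun g ↦ by
      simpa [dualDistrib_tmul_eq_comp_rTensor] using h f g

theorem eq_zero_of_forall_dualDistrib_dualDistrib_eq_zero [Module.Free R M] [Module.Free R N]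
    [Module.Projective R P] (t : M ⊗[R] (N ⊗[R] P))
    (h : ∀ f g l, dualDistrib R M (N ⊗[R] P) (f ⊗ₜ dualDistrib R N P (g ⊗ₜ l)) t = 0) :
    t = 0 :=
  eq_zero_of_forall_lid_rTensor_eq_zero t fun f ↦
    eq_zero_of_forall_dualDistrib_eq_zero _ fun g l ↦ by
      simpa [dualDistrib_tmul_eq_comp_rTensor] using h f g l

theorem dualDistrib_dualDistrib_assoc_tmul (f : Dual R M) (g : Dual R N) (l : Dual R P)
    (w : M ⊗[R] N) (p : P) :
    dualDistrib R M (N ⊗[R] P) (f ⊗ₜ dualDistrib R N P (g ⊗ₜ l))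
        (TensorProduct.assoc R M N P (w ⊗ₜ p)) =
      dualDistrib R M N (f ⊗ₜ g) w * l p := by
  induction w using TensorProduct.induction_on with
  | zero => simp
  | tmul m n => simp [mul_assoc]
  | add w₁ w₂ h₁ h₂ => simp [add_tmul, h₁, h₂, add_mul]

end TensorProduct

theorem Module.Dual.forall_comp_mulRight_eq_self_iff {R A : Type*} [CommRing R] [Ring A]
    [Algebra R A] [Module.Projective R A] (a : A) :
    (∀ X : Module.Dual R A, X ∘ₗ LinearMap.mulRight R a = X) ↔ a = 1 := by
  refine ⟨fun h ↦ sub_eq_zero.mp ?_, fun ha X ↦ by ext; simp [ha]⟩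
  refine (Module.forall_dual_apply_eq_zero_iff R _).mp fun X ↦ ?_
  simpa [sub_eq_zero] using LinearMap.congr_fun (h X) 1

open Module TensorProduct

theorem twMul_apply (J : H ⊗[k] H) (X Y : Dual k H) (h : H) :
    twMul k H J X Y h = dualDistrib k H H (X ⊗ₜ Y) (Coalgebra.comul (R := k) h * J) := rfl

theorem comul12_eq_algHom : comul12 k H =
    ((Algebra.TensorProduct.assoc k k k H H H).toAlgHom.comp
      (Algebra.TensorProduct.map (Bialgebra.comulAlgHom k H) (AlgHom.id k H))).toLinearMap := by
  ext a b
  simp [comul12]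
  rfl

theorem comul23_eq_algHom : comul23 k H =
    (Algebra.TensorProduct.map (AlgHom.id k H) (Bialgebra.comulAlgHom k H)).toLinearMap := by
  ext a b
  simp [comul23]

theorem counitL_eq_algHom : counitL k H =
    ((Algebra.TensorProduct.lid k H).toAlgHom.comp
      (Algebra.TensorProduct.map (Bialgebra.counitAlgHom k H) (AlgHom.id k H))).toLinearMap := by
  ext a b
  simp [counitL]

theorem counitR_eq_algHom : counitR k H =
    ((Algebra.TensorProduct.rid k k H).toAlgHom.comp
      (Algebra.TensorProduct.map (AlgHom.id k H) (Bialgebra.counitAlgHom k H))).toLinearMap := by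
  ext a b
  simp [counitR]

theorem comul12_mul (u v : H ⊗[k] H) :
    comul12 k H (u * v) = comul12 k H u * comul12 k H v := by
  simp only [comul12_eq_algHom, AlgHom.toLinearMap_apply, map_mul]

theorem comul12_one : comul12 k H 1 = 1 := by
  simp only [comul12_eq_algHom, AlgHom.toLinearMap_apply, map_one]

theorem comul23_one : comul23 k H 1 = 1 := by
  simp only [comul23_eq_algHom, AlgHom.toLinearMap_apply, map_one]

theorem comul23_mul (u v : H ⊗[k] H) :
    comul23 k H (u * v) = comul23 k H u * comul23 k H v := by
  simp only [comul23_eq_algHom, AlgHom.toLinearMap_apply, map_mul]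

theorem counitL_mul (u v : H ⊗[k] H) :
    counitL k H (u * v) = counitL k H u * counitL k H v := by
  simp only [counitL_eq_algHom, AlgHom.toLinearMap_apply, map_mul]

theorem counitR_mul (u v : H ⊗[k] H) :
    counitR k H (u * v) = counitR k H u * counitR k H v := by
  simp only [counitR_eq_algHom, AlgHom.toLinearMap_apply, map_mul]

theorem comul12_comul (h : H) :
    comul12 k H (Coalgebra.comul (R := k) h) = comul23 k H (Coalgebra.comul (R := k) h) :=
  Coalgebra.coassoc_apply h

theorem counitL_comul (h : H) : counitL k H (Coalgebra.comul (R := k) h) = h := by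
  change TensorProduct.lid k H (Coalgebra.counit.rTensor H (Coalgebra.comul h)) = h
  rw [Coalgebra.rTensor_counit_comul, TensorProduct.lid_tmul, one_smul]

theorem counitR_comul (h : H) : counitR k H (Coalgebra.comul (R := k) h) = h := by
  change TensorProduct.rid k H (Coalgebra.counit.lTensor H (Coalgebra.comul h)) = h
  rw [Coalgebra.lTensor_counit_comul, TensorProduct.rid_tmul, one_smul]

theorem dualDistrib_twMul_tmul (J : H ⊗[k] H) (X Y Z : Dual k H) (u : H ⊗[k] H) :
    dualDistrib k H H (twMul k H J X Y ⊗ₜ Z) u =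
      dualDistrib k H (H ⊗[k] H) (X ⊗ₜ dualDistrib k H H (Y ⊗ₜ Z))
        (comul12 k H u * tmulOne k H J) := by
  induction u using TensorProduct.induction_on with
  | zero => simp
  | tmul a b =>
    have : comul12 k H (a ⊗ₜ b) * tmulOne k H J =
        TensorProduct.assoc k H H H ((Coalgebra.comul a * J) ⊗ₜ b) := by
      rw [← mul_one b, ← Algebra.TensorProduct.tmul_mul_tmul, mul_one]
      exact (map_mul (Algebra.TensorProduct.assoc k k k H H H) (Coalgebra.comul a ⊗ₜ b)
        (J ⊗ₜ 1)).symm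
    rw [this, dualDistrib_dualDistrib_assoc_tmul, dualDistrib_apply]
    rfl
  | add u v hu hv => simp [add_mul, hu, hv]

theorem dualDistrib_tmul_twMul (J : H ⊗[k] H) (X Y Z : Dual k H) (u : H ⊗[k] H) :
    dualDistrib k H H (X ⊗ₜ twMul k H J Y Z) u =
      dualDistrib k H (H ⊗[k] H) (X ⊗ₜ dualDistrib k H H (Y ⊗ₜ Z))
        (comul23 k H u * ((1 : H) ⊗ₜ J)) := by
  induction u using TensorProduct.induction_on with
  | zero => simp
  | tmul a b =>
    have : comul23 k H (a ⊗ₜ b) * ((1 : H) ⊗ₜ J) = a ⊗ₜ (Coalgebra.comul b * J) := by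
      rw [comul23, map_tmul, LinearMap.id_apply, Algebra.TensorProduct.tmul_mul_tmul, mul_one]
    rw [this, dualDistrib_apply, dualDistrib_apply]
    rfl
  | add u v hu hv => simp [add_mul, hu, hv]

theorem twMul_twMul_apply_left (J : H ⊗[k] H) (X Y Z : Dual k H) (h : H) :
    twMul k H J (twMul k H J X Y) Z h =
      dualDistrib k H (H ⊗[k] H) (X ⊗ₜ dualDistrib k H H (Y ⊗ₜ Z))
        (comul12 k H (Coalgebra.comul h) * (comul12 k H J * tmulOne k H J)) := by
  rw [twMul_apply, dualDistrib_twMul_tmul, comul12_mul, mul_assoc]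

theorem twMul_twMul_apply_right (J : H ⊗[k] H) (X Y Z : Dual k H) (h : H) :
    twMul k H J X (twMul k H J Y Z) h =
      dualDistrib k H (H ⊗[k] H) (X ⊗ₜ dualDistrib k H H (Y ⊗ₜ Z))
        (comul23 k H (Coalgebra.comul h) * (comul23 k H J * ((1 : H) ⊗ₜ J))) := by
  rw [twMul_apply, dualDistrib_tmul_twMul, comul23_mul, mul_assoc]

theorem twMul_assoc_iff (J : H ⊗[k] H) :
    (∀ X Y Z : Dual k H,
        twMul k H J (twMul k H J X Y) Z = twMul k H J X (twMul k H J Y Z)) ↔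
      comul12 k H J * tmulOne k H J = comul23 k H J * ((1 : H) ⊗ₜ J) := by
  refine ⟨fun hassoc ↦ sub_eq_zero.mp ?_, fun hJ X Y Z ↦ ?_⟩
  · refine eq_zero_of_forall_dualDistrib_dualDistrib_eq_zero _ fun X Y Z ↦ ?_
    have h1 := LinearMap.congr_fun (hassoc X Y Z) 1
    rw [twMul_twMul_apply_left, twMul_twMul_apply_right, Bialgebra.comul_one,
      comul12_one, comul23_one, one_mul, one_mul] at h1
    rw [map_sub, h1, sub_self]
  · ext h
    rw [twMul_twMul_apply_left, twMul_twMul_apply_right, comul12_comul, hJ]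

theorem dualDistrib_counit_tmul (X : Dual k H) (u : H ⊗[k] H) :
    dualDistrib k H H (Coalgebra.counit ⊗ₜ X) u = X (counitL k H u) := by
  induction u using TensorProduct.induction_on with
  | zero => simp
  | tmul a b => simp [counitL]
  | add u v hu hv => simp [hu, hv]

theorem dualDistrib_tmul_counit (X : Dual k H) (u : H ⊗[k] H) :
    dualDistrib k H H (X ⊗ₜ Coalgebra.counit) u = X (counitR k H u) := by
  induction u using TensorProduct.induction_on with
  | zero => simp
  | tmul a b => simp [counitR, mul_comm]
  | add u v hu hv => simp [hu, hv]

theorem counit_twMul (J : H ⊗[k] H) (X : Dual k H) :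
    twMul k H J Coalgebra.counit X = X ∘ₗ LinearMap.mulRight k (counitL k H J) := by
  ext h
  rw [twMul_apply, dualDistrib_counit_tmul, counitL_mul, counitL_comul]
  rfl

theorem twMul_counit (J : H ⊗[k] H) (X : Dual k H) :
    twMul k H J X Coalgebra.counit = X ∘ₗ LinearMap.mulRight k (counitR k H J) := by
  ext h
  rw [twMul_apply, dualDistrib_tmul_counit, counitR_mul, counitR_comul]
  rfl

theorem counit_twMul_and_twMul_counit_eq_self_iff (J : H ⊗[k] H) :
    (∀ X : Dual k H,
        twMul k H J Coalgebra.counit X = X ∧ twMul k H J X Coalgebra.counit = X) ↔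
      counitL k H J = 1 ∧ counitR k H J = 1 := by
  simp only [forall_and, counit_twMul, twMul_counit, Dual.forall_comp_mulRight_eq_self_iff]

theorem stmt_5 (J : H ⊗[k] H) :
    ((∀ X Y Z : Module.Dual k H,
        twMul k H J (twMul k H J X Y) Z = twMul k H J X (twMul k H J Y Z)) ↔
      comul12 k H J * tmulOne k H J = comul23 k H J * ((1 : H) ⊗ₜ[k] J)) ∧
    ((∀ X : Module.Dual k H,
        twMul k H J (Coalgebra.counit (R := k)) X = X ∧
        twMul k H J X (Coalgebra.counit (R := k)) = X) ↔
      (counitL k H J = 1 ∧ counitR k H J = 1)) :=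
  ⟨twMul_assoc_iff k H J, counit_twMul_and_twMul_counit_eq_self_iff k H J⟩

end
end

section
/- Let k be a field of characteristic zero, N > 1, q ∈ k a primitive N-th root of unity, A a k-algebra, and u, x ∈ A with u·x = q·(x·u) and x^N = 0. For ξ ∈ k set J_ξ = 1⊗1 + ∑_{k=1}^{N−1} (ξ/((N−k)!_q · (k)!_q)) · (x^{N−k} u^k) ⊗ x^k ∈ A ⊗ A. Then for all ξ, ξ′ ∈ k one has J_ξ · J_{ξ′} = J_{ξ+ξ′} in the algebra A ⊗ A; in particular J_ξ is invertible with inverse J_{−ξ}. -/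
open scoped TensorProduct

noncomputable section

/-- `J_ξ = 1⊗1 + ∑_{m=1}^{N-1} (ξ/((N-m)!_q (m)!_q)) · (x^{N-m} u^m) ⊗ x^m ∈ A ⊗ A`. -/
def Jxi {k : Type*} (A : Type*) [Field k] [Ring A] [Algebra k A]
    (q : k) (N : ℕ) (u x : A) (ξ : k) : A ⊗[k] A :=
  1 + ∑ m ∈ Finset.Icc 1 (N - 1),
    (ξ / (qFact q (N - m) * qFact q m)) • ((x ^ (N - m) * u ^ m) ⊗ₜ[k] x ^ m)

section Aux

variable {k A : Type*} [Field k] [Ring A] [Algebra k A]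

lemma aux_ux_pow (q : k) (u x : A) (hux : u * x = q • (x * u)) (p : ℕ) :
    u * x ^ p = (q ^ p) • (x ^ p * u) := by
  induction p with
  | zero => simp
  | succ p ih =>
      rw [pow_succ, ← mul_assoc, ih, smul_mul_assoc, mul_assoc, hux,
        mul_smul_comm, smul_smul, ← mul_assoc, pow_succ]

lemma aux_upow_xpow (q : k) (u x : A) (hux : u * x = q • (x * u)) (m p : ℕ) :
    u ^ m * x ^ p = (q ^ (m * p)) • (x ^ p * u ^ m) := by
  induction m with
  | zero => simp
  | succ m ih =>
      rw [pow_succ, mul_assoc, aux_ux_pow q u x hux p, mul_smul_comm,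
        ← mul_assoc, ih, smul_mul_assoc, smul_smul, mul_assoc, ← pow_add]
      ring_nf

lemma aux_xu_mul_xu (q : k) (u x : A) (hux : u * x = q • (x * u)) (i j p r : ℕ) :
    (x ^ i * u ^ j) * (x ^ p * u ^ r) = (q ^ (j * p)) • (x ^ (i + p) * u ^ (j + r)) := by
  rw [mul_assoc, ← mul_assoc (u ^ j), aux_upow_xpow q u x hux j p, smul_mul_assoc,
    mul_smul_comm, mul_assoc, ← pow_add, ← mul_assoc, ← pow_add]

lemma aux_xu_pow (q : k) (u x : A) (hux : u * x = q • (x * u)) (i j : ℕ) :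
    ∀ m : ℕ, ∃ s : k, (x ^ i * u ^ j) ^ m = s • (x ^ (m * i) * u ^ (m * j)) := by
  intro m
  induction m with
  | zero => exact ⟨1, by simp⟩
  | succ m ih =>
      obtain ⟨s, hs⟩ := ih
      refine ⟨s * q ^ (m * j * i), ?_⟩
      rw [pow_succ, hs, smul_mul_assoc, aux_xu_mul_xu q u x hux, smul_smul,
        Nat.succ_mul, Nat.succ_mul]

lemma aux_xpow_zero (x : A) (N : ℕ) (hxN : x ^ N = 0) {a : ℕ} (ha : N ≤ a) :
    x ^ a = 0 := by
  obtain ⟨b, rfl⟩ := Nat.exists_eq_add_of_le ha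
  rw [pow_add, hxN, zero_mul]

lemma aux_tmul_pow (a b : A) (m : ℕ) :
    ((a ⊗ₜ[k] b) : A ⊗[k] A) ^ m = (a ^ m) ⊗ₜ[k] (b ^ m) := by
  induction m with
  | zero => simp [Algebra.TensorProduct.one_def]
  | succ m ih => rw [pow_succ, ih, Algebra.TensorProduct.tmul_mul_tmul, pow_succ, pow_succ]

lemma aux_term_zero (q : k) (N : ℕ) (hN : 1 < N) (u x : A)
    (hux : u * x = q • (x * u)) (hxN : x ^ N = 0)
    {m n : ℕ} (hm : m ∈ Finset.Icc 1 (N - 1)) (hn : n ∈ Finset.Icc 1 (N - 1)) :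
    (((x ^ (N - m) * u ^ m) ⊗ₜ[k] x) ^ m) * (((x ^ (N - n) * u ^ n) ⊗ₜ[k] x) ^ n)
      = 0 := by
  simp only [Finset.mem_Icc] at hm hn
  rw [aux_tmul_pow, aux_tmul_pow, Algebra.TensorProduct.tmul_mul_tmul]
  by_cases h : N ≤ m + n
  · rw [← pow_add, aux_xpow_zero x N hxN h, TensorProduct.tmul_zero]
  · push_neg at h
    obtain ⟨s, hs⟩ := aux_xu_pow q u x hux (N - m) m m
    obtain ⟨t, ht⟩ := aux_xu_pow q u x hux (N - n) n n
    rw [hs, ht, smul_mul_assoc, mul_smul_comm, aux_xu_mul_xu q u x hux]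
    have hx0 : x ^ (m * (N - m) + n * (N - n)) = 0 := by
      refine aux_xpow_zero x N hxN ?_
      have h1 : N - m ≤ m * (N - m) := Nat.le_mul_of_pos_left _ hm.1
      have h2 : N - n ≤ n * (N - n) := Nat.le_mul_of_pos_left _ hn.1
      have h3 : N ≤ (N - m) + (N - n) := by omega
      exact h3.trans (Nat.add_le_add h1 h2)
    rw [hx0, zero_mul, smul_zero, smul_zero, smul_zero, TensorProduct.zero_tmul]

end Aux

theorem stmt_8 {k A : Type*} [Field k] [CharZero k] [Ring A] [Algebra k A]
    (N : ℕ) (hN : 1 < N) (q : k) (hq : IsPrimitiveRoot q N)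
    (u x : A) (hux : u * x = q • (x * u)) (hxN : x ^ N = 0) (ξ ξ' : k) :
    Jxi A q N u x ξ * Jxi A q N u x ξ' = Jxi A q N u x (ξ + ξ') ∧
    Jxi A q N u x ξ * Jxi A q N u x (-ξ) = 1 ∧
    Jxi A q N u x (-ξ) * Jxi A q N u x ξ = 1 := by
  set S : A ⊗[k] A := ∑ m ∈ Finset.Icc 1 (N - 1),
    (qFact q (N - m) * qFact q m)⁻¹ • (((x ^ (N - m) * u ^ m) ⊗ₜ[k] x) ^ m) with hS
  have hJ : ∀ ζ : k, Jxi A q N u x ζ = 1 + ζ • S := by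
    intro ζ
    rw [Jxi, hS, Finset.smul_sum]
    congr 1
    refine Finset.sum_congr rfl fun m _ => ?_
    rw [smul_smul, div_eq_mul_inv]
  have hSS : S * S = 0 := by
    rw [hS, Finset.sum_mul_sum]
    refine Finset.sum_eq_zero fun m hm => Finset.sum_eq_zero fun n hn => ?_
    rw [smul_mul_assoc, mul_smul_comm, aux_term_zero q N hN u x hux hxN hm hn,
      smul_zero, smul_zero]
  have key : ∀ a b : k, Jxi A q N u x a * Jxi A q N u x b = Jxi A q N u x (a + b) := by
    intro a b
    have h1 : (a • S) * (b • S) = (a * b) • (S * S) := by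
      rw [smul_mul_assoc, mul_smul_comm, smul_smul]
    rw [hJ, hJ, hJ, mul_add, add_mul, add_mul, one_mul, mul_one, one_mul, h1, hSS,
      smul_zero, add_zero, add_smul, add_assoc]
  have hJ0 : Jxi A q N u x 0 = 1 := by
    rw [hJ, zero_smul, add_zero]
  refine ⟨key ξ ξ', ?_, ?_⟩
  · rw [key, add_neg_cancel, hJ0]
  · rw [key, neg_add_cancel, hJ0]

end
end
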